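/- Let V be an unramified discrete valuation ring of mixed characteristic (0,p), let n ≥ 2, let R = (V[X_1,…,X_n]/(X_1^n+⋯+X_n^n))[X_1t,…,X_nt] be the blow-up algebra, and let I = (X_1t,…,X_nt)R. Then pR ∩ I = pI; equivalently, Tor_1^R(R/pR, R/I) = 0 and the natural surjection I/pI → I·(R/pR) is an isomorphism. -/

import Mathlib

universe u

open MvPolynomial

/-- The Fermat hypersurface ring `V[X₁,…,Xₙ]/(X₁ⁿ+⋯+Xₙⁿ)`. -/
abbrev FermatRing (V : Type u) [CommRing V] (n : ℕ) : Type u :=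
  MvPolynomial (Fin n) V ⧸ Ideal.span {(∑ j : Fin n, (X j : MvPolynomial (Fin n) V) ^ n)}

/-- The blow-up algebra `(V[X₁,…,Xₙ]/(X₁ⁿ+⋯+Xₙⁿ))[X₁t,…,Xₙt]`: the subring of
`(V[X₁,…,Xₙ]/(X₁ⁿ+⋯+Xₙⁿ))[t]` generated over `V[X₁,…,Xₙ]/(X₁ⁿ+⋯+Xₙⁿ)` by
`X₁t, …, Xₙt`. -/
noncomputable abbrev blowupSubalgebra (V : Type u) [CommRing V] (n : ℕ) :
    Subalgebra (FermatRing V n) (Polynomial (FermatRing V n)) :=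
  Algebra.adjoin (FermatRing V n)
    (Set.range fun i : Fin n =>
      Polynomial.C (Ideal.Quotient.mk _ (X i)) * Polynomial.X)

/-- The blow-up algebra as a type. -/
noncomputable abbrev BlowupAlgebra (V : Type u) [CommRing V] (n : ℕ) : Type u :=
  ↥(blowupSubalgebra V n)

/-- The element `Xᵢt` of the blow-up algebra. -/
noncomputable def blowupXt (V : Type u) [CommRing V] (n : ℕ) (i : Fin n) :
    BlowupAlgebra V n :=
  ⟨Polynomial.C (Ideal.Quotient.mk _ (X i)) * Polynomial.X,
    Algebra.subset_adjoin ⟨i, rfl⟩⟩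

/-- The ideal `I = (X₁t, …, Xₙt)` of the blow-up algebra. -/
noncomputable def blowupI (V : Type u) [CommRing V] (n : ℕ) :
    Ideal (BlowupAlgebra V n) :=
  Ideal.span (Set.range (blowupXt V n))

/-!
The ideal `I = (X₁t, …, Xₙt)` is the kernel of the augmentation `R → A = V[X]/(X₁ⁿ + ⋯ + Xₙⁿ)`,
`t ↦ 0`, because `R` is generated over `A` by the `Xᵢt`. The uniformizer `p` is a prime of the domain
`V[X]` not dividing the Fermat polynomial, so it is a nonzerodivisor on `A`. Thus if `pg ∈ I` then
`p · g(0) = 0` in `A`, hence `g(0) = 0`, i.e. `g ∈ I`, and `pg ∈ pI`.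
-/

theorem Ideal.span_singleton_inf_eq_mul_of_mul_mem {R : Type*} [CommRing R] {I : Ideal R} {x : R}
    (hx : ∀ g, x * g ∈ I → g ∈ I) :
    Ideal.span {x} ⊓ I = Ideal.span {x} * I := by
  refine le_antisymm ?_ Ideal.mul_le_inf
  rintro _ ⟨hxg, hgI⟩
  obtain ⟨g, rfl⟩ := Ideal.mem_span_singleton'.mp hxg
  rw [mul_comm g x] at hgI ⊢
  exact Ideal.mul_mem_mul (Ideal.mem_span_singleton_self x) (hx g hgI)

theorem AlgHom.sub_algebraMap_mem_span_of_adjoin_eq_top {R S : Type*} [CommRing R] [CommRing S]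
    [Algebra R S] {s : Set S} (hs : Algebra.adjoin R s = ⊤) (φ : S →ₐ[R] R)
    (hφ : ∀ x ∈ s, φ x = 0) (x : S) :
    x - algebraMap R S (φ x) ∈ Ideal.span s := by
  induction (hs ▸ Algebra.mem_top : x ∈ Algebra.adjoin R s) using Algebra.adjoin_induction with
  | mem x hx => simpa [hφ x hx] using Ideal.subset_span hx
  | algebraMap r => simp
  | add x y _ _ hx hy => simpa [add_sub_add_comm] using add_mem hx hy
  | mul x y _ _ hx hy =>
    have e : x * y - algebraMap R S (φ (x * y)) =
        x * (y - algebraMap R S (φ y)) + (x - algebraMap R S (φ x)) * algebraMap R S (φ y) := by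
      rw [map_mul, map_mul]; ring
    rw [e]
    exact add_mem (Ideal.mul_mem_left _ _ hy) (Ideal.mul_mem_right _ _ hx)

theorem AlgHom.ker_eq_span_of_adjoin_eq_top {R S : Type*} [CommRing R] [CommRing S]
    [Algebra R S] {s : Set S} (hs : Algebra.adjoin R s = ⊤) (φ : S →ₐ[R] R)
    (hφ : ∀ x ∈ s, φ x = 0) :
    RingHom.ker φ = Ideal.span s := by
  refine le_antisymm (fun x hx => ?_) (Ideal.span_le.mpr hφ)
  simpa [(RingHom.mem_ker).mp hx] using φ.sub_algebraMap_mem_span_of_adjoin_eq_top hs hφ x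

theorem Ideal.Quotient.isLeftRegular_mk_of_prime {R : Type*} [CommRing R] [IsDomain R]
    {π f : R} (hπ : Prime π) (hf : ¬π ∣ f) :
    IsLeftRegular (Ideal.Quotient.mk (Ideal.span {f}) π) := by
  intro a b hab
  obtain ⟨a, rfl⟩ := Ideal.Quotient.mk_surjective a
  obtain ⟨b, rfl⟩ := Ideal.Quotient.mk_surjective b
  simp only [← map_mul, Ideal.Quotient.eq, Ideal.mem_span_singleton'] at hab ⊢
  obtain ⟨c, hc⟩ := hab
  obtain ⟨d, rfl⟩ := (hπ.dvd_or_dvd ⟨a - b, by rw [hc, mul_sub]⟩).resolve_right hf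
  exact ⟨d, mul_left_cancel₀ hπ.ne_zero (by rw [← mul_assoc, hc, mul_sub])⟩

theorem MvPolynomial.not_C_dvd_sum_X_pow {V : Type*} [CommRing V] {π : V} (hπ : ¬IsUnit π) {n : ℕ}
    (hn : 0 < n) :
    ¬(C π : MvPolynomial (Fin n) V) ∣ ∑ j : Fin n, X j ^ n := by
  intro h
  -- evaluating at the first basis vector sends the Fermat polynomial to `1`
  have := map_dvd (eval (Pi.single ⟨0, hn⟩ 1)) h
  simp [Pi.single_apply, ite_pow, zero_pow hn.ne'] at this
  exact hπ (isUnit_of_dvd_one this)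

theorem FermatRing.isLeftRegular_algebraMap {V : Type u} [CommRing V] [IsDomain V] {π : V}
    (hπ : Prime π) {n : ℕ} (hn : 0 < n) :
    IsLeftRegular (algebraMap V (FermatRing V n) π) :=
  Ideal.Quotient.isLeftRegular_mk_of_prime ((MvPolynomial.prime_C_iff _).mpr hπ)
    (MvPolynomial.not_C_dvd_sum_X_pow hπ.not_isUnit hn)

noncomputable def blowupConstantCoeff (V : Type u) [CommRing V] (n : ℕ) :
    BlowupAlgebra V n →ₐ[FermatRing V n] FermatRing V n :=
  (Polynomial.aeval 0).comp (blowupSubalgebra V n).val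

theorem blowupI_eq_ker (V : Type u) [CommRing V] (n : ℕ) :
    blowupI V n = RingHom.ker (blowupConstantCoeff V n) := by
  have hrange : Set.range (blowupXt V n) =
      Subtype.val ⁻¹' Set.range fun i : Fin n =>
        Polynomial.C (Ideal.Quotient.mk _ (X i)) * Polynomial.X := by
    ext x
    exact ⟨fun ⟨i, hi⟩ => ⟨i, hi ▸ rfl⟩, fun ⟨i, hi⟩ => ⟨i, Subtype.ext hi⟩⟩
  refine (AlgHom.ker_eq_span_of_adjoin_eq_top (R := FermatRing V n) (S := BlowupAlgebra V n)
    ?_ (blowupConstantCoeff V n) ?_).symm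
  · rw [hrange]
    exact Algebra.adjoin_adjoin_coe_preimage (R := FermatRing V n)
  · rintro _ ⟨i, rfl⟩
    simp [blowupConstantCoeff, blowupXt]

set_option synthInstance.maxHeartbeats 1000000 in
set_option maxHeartbeats 2000000 in
theorem blowup_pR_inter_I_eq_pI_general
    (V : Type u) [CommRing V] [IsDomain V] [IsDiscreteValuationRing V]
    (p : ℕ)
    (hunram : IsLocalRing.maximalIdeal V = Ideal.span {(p : V)})
    (n : ℕ) (hn : 2 ≤ n) :
    Ideal.span {(p : BlowupAlgebra V n)} ⊓ blowupI V n =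
      Ideal.span {(p : BlowupAlgebra V n)} * blowupI V n := by
  have hp : Prime (p : V) :=
    ((IsDiscreteValuationRing.irreducible_iff_uniformizer _).mpr hunram).prime
  have hp_regular : IsLeftRegular (p : FermatRing V n) := by
    simpa only [map_natCast] using FermatRing.isLeftRegular_algebraMap hp (n := n) (by omega)
  rw [blowupI_eq_ker V n]
  refine Ideal.span_singleton_inf_eq_mul_of_mul_mem (R := BlowupAlgebra V n) fun g hg => ?_
  simp only [RingHom.mem_ker, map_mul, map_natCast] at hg ⊢
  exact hp_regular.mul_left_eq_zero_iff.mp hg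

set_option synthInstance.maxHeartbeats 1000000 in
set_option maxHeartbeats 2000000 in
/-- Let `V` be an unramified discrete valuation ring of mixed
characteristic `(0, p)`, let `n ≥ 2`, let `R = (V[X₁,…,Xₙ]/(X₁ⁿ+⋯+Xₙⁿ))[X₁t,…,Xₙt]` be
the blow-up algebra and `I = (X₁t,…,Xₙt) ⊆ R`.  Then `pR ∩ I = pI`. -/
theorem blowup_pR_inter_I_eq_pI
    (V : Type u) [CommRing V] [IsDomain V] [IsDiscreteValuationRing V] [CharZero V]
    (p : ℕ) (hp : p.Prime)
    (hunram : IsLocalRing.maximalIdeal V = Ideal.span {(p : V)})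
    (n : ℕ) (hn : 2 ≤ n) :
    Ideal.span {(p : BlowupAlgebra V n)} ⊓ blowupI V n =
      Ideal.span {(p : BlowupAlgebra V n)} * blowupI V n :=
  blowup_pR_inter_I_eq_pI_general V p hunram n hn
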